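/- Let X be a first countable topological space and A ⊆ C_p(X,[0,1]). If the closure of A in C_p(X) is not countably compact, then there exist sequences ⟨fₙ⟩ in A and ⟨xₘ⟩ in X and ultrafilters 𝒰, 𝒱 on ℕ with lim_{m→𝒱} xₘ existing in X, such that lim_{n→𝒰} lim_{m→𝒱} fₙ(xₘ) ≠ lim_{m→𝒱} lim_{n→𝒰} fₙ(xₘ). -/

import Mathlib

open Filter Topology

/-- The space `C_p(X)` of continuous real-valued functions on `X` with the
topology of pointwise convergence (inherited from the product topology). -/
def Cp (X : Type*) [TopologicalSpace X] : Type _ := {f : X → ℝ // Continuous f}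

instance (X : Type*) [TopologicalSpace X] : TopologicalSpace (Cp X) :=
  instTopologicalSpaceSubtype

/-- `p` is a limit point of `S`. -/
def IsLimitPt {Y : Type*} [TopologicalSpace Y] (S : Set Y) (p : Y) : Prop :=
  p ∈ closure (S \ {p})

/-- `A` is countably compact in the ambient space `Y`: every infinite subset of `A`
has a limit point in `Y`. -/
def CountablyCompactIn {Y : Type*} [TopologicalSpace Y] (A : Set Y) : Prop :=
  ∀ S ⊆ A, S.Infinite → ∃ p : Y, IsLimitPt S p

/-!
Take an injective sequence `ψ` in the closure of `A` without a limit point there, and let `φ` be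
its pointwise limit along a free ultrafilter `𝒰` (it exists since all values lie in `[0,1]`).
If `φ` were continuous it would be a limit point of `ψ` in the closure of `A`, so `φ` is
discontinuous at some `x₀`; first countability gives a sequence `x m → x₀` and an ultrafilter `𝒱`
along which `φ (x m)` converges to some `β ≠ φ x₀`. Replacing `ψ n` by some `f n ∈ A` that is
`1/(n+1)`-close to it at the first `n+1` points of an enumeration of `{x₀} ∪ range x` keeps
`lim_𝒰 f n = φ` at `x₀` and at every `x m`, while `lim_𝒱 f n (x m) = f n x₀` by continuity; so the two iterated limits are `φ x₀` and `β`.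
-/

open Set

section General

variable {ι Y : Type*} [TopologicalSpace Y]

theorem IsCompact.exists_tendsto_ultrafilter {K : Set Y} (hK : IsCompact K) {u : ι → Y}
    (hu : ∀ i, u i ∈ K) (𝒰 : Ultrafilter ι) : ∃ a ∈ K, Tendsto u 𝒰 (𝓝 a) :=
  hK.ultrafilter_le_nhds (𝒰.map u) (le_principal_iff.2 (mem_map.2 (univ_mem' hu)))

theorem isLimitPt_range_of_tendsto {ψ : ι → Y} (hψ : Function.Injective ψ) {l : Filter ι}
    [l.NeBot] (hl : l ≤ cofinite) {p : Y} (h : Tendsto ψ l (𝓝 p)) : IsLimitPt (range ψ) p :=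
  mem_closure_of_tendsto h <|
    ((hψ.tendsto_cofinite.mono_left hl).eventually (finite_singleton p).compl_mem_cofinite).mono
      fun n hn => ⟨mem_range_self n, hn⟩

theorem exists_injective_seq_of_not_countablyCompactIn {B : Set Y}
    (h : ¬ CountablyCompactIn (Y := B) univ) :
    ∃ ψ : ℕ → Y, Function.Injective ψ ∧ (∀ n, ψ n ∈ B) ∧ ∀ p ∈ B, ¬ IsLimitPt (range ψ) p := by
  simp only [CountablyCompactIn, subset_univ, true_implies, not_forall, not_exists] at h
  obtain ⟨S, hS, hlim⟩ := h
  let u := hS.natEmbedding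
  refine ⟨fun n => (u n : B), fun a b hab => u.injective (Subtype.ext (Subtype.ext hab)),
    fun n => (u n : B).2, fun p hp hp' => hlim ⟨p, hp⟩ (closure_subtype.2 ?_)⟩
  refine closure_mono ?_ hp'
  rintro _ ⟨⟨n, rfl⟩, hn⟩
  exact ⟨u n, ⟨(u n).2, fun h => hn (congrArg Subtype.val h)⟩, rfl⟩

theorem exists_ultrafilter_tendsto_ne_of_not_continuousAt {X : Type*} [TopologicalSpace X]
    [FirstCountableTopology X] {φ : X → Y} {K : Set Y} (hK : IsCompact K) (hφ : ∀ x, φ x ∈ K)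
    {x₀ : X} (h : ¬ ContinuousAt φ x₀) :
    ∃ (x : ℕ → X) (𝒱 : Ultrafilter ℕ) (β : Y),
      Tendsto x 𝒱 (𝓝 x₀) ∧ Tendsto (φ ∘ x) 𝒱 (𝓝 β) ∧ β ≠ φ x₀ := by
  obtain ⟨x, hx, hφx⟩ := not_forall₂.1 (mt tendsto_iff_seq_tendsto.2 h)
  obtain ⟨𝒱, h𝒱, hφ𝒱⟩ := not_forall₂.1 (mt (tendsto_iff_ultrafilter _ _ _).2 hφx)
  obtain ⟨β, -, hβ⟩ := hK.exists_tendsto_ultrafilter (fun m => hφ (x m)) 𝒱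
  exact ⟨x, 𝒱, β, hx.mono_left h𝒱, hβ, fun hβφ => hφ𝒱 (hβφ ▸ hβ)⟩

end General

namespace Cp

variable {X : Type*} [TopologicalSpace X]

theorem continuous_eval (x : X) : Continuous fun f : Cp X => f.1 x :=
  (continuous_apply x).comp continuous_subtype_val

theorem tendsto_nhds_iff {ι : Type*} {F : ι → Cp X} {l : Filter ι} {Φ : Cp X} :
    Tendsto F l (𝓝 Φ) ↔ ∀ x, Tendsto (fun i => (F i).1 x) l (𝓝 (Φ.1 x)) :=
  tendsto_subtype_rng.trans tendsto_pi_nhds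

theorem apply_mem_of_mem_closure {A : Set (Cp X)} {K : Set ℝ} (hK : IsClosed K)
    (hA : ∀ f ∈ A, ∀ x, f.1 x ∈ K) {g : Cp X} (hg : g ∈ closure A) (x : X) : g.1 x ∈ K :=
  closure_minimal (image_subset_iff.2 fun f hf => hA f hf x) hK
    (image_closure_subset_closure_image (continuous_eval x) ⟨g, hg, rfl⟩)

theorem exists_mem_dist_lt_of_mem_closure {A : Set (Cp X)} {g : Cp X} (hg : g ∈ closure A)
    (s : Finset X) {δ : ℝ} (hδ : 0 < δ) : ∃ f ∈ A, ∀ q ∈ s, dist (f.1 q) (g.1 q) < δ := by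
  have hnear : ∀ᶠ f in 𝓝 g, ∀ q ∈ s, dist (f.1 q) (g.1 q) < δ :=
    (eventually_all_finset s).2 fun q _ =>
      (continuous_eval q).continuousAt.eventually (Metric.ball_mem_nhds _ hδ)
  obtain ⟨f, hfA, hf⟩ := ((mem_closure_iff_frequently.1 hg).and_eventually hnear).exists
  exact ⟨f, hfA, hf⟩

theorem exists_seq_dist_tendsto_zero {A : Set (Cp X)} {ψ : ℕ → Cp X} (hψ : ∀ n, ψ n ∈ closure A)
    {D : Set X} (hD : D.Countable) (hDne : D.Nonempty) :
    ∃ f : ℕ → Cp X, (∀ n, f n ∈ A) ∧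
      ∀ q ∈ D, Tendsto (fun n => dist ((f n).1 q) ((ψ n).1 q)) atTop (𝓝 0) := by
  classical
  obtain ⟨q, rfl⟩ := hD.exists_eq_range hDne
  choose f hfA hf using fun n => exists_mem_dist_lt_of_mem_closure (hψ n)
    ((Finset.range (n + 1)).image q) (Nat.one_div_pos_of_nat (α := ℝ))
  refine ⟨f, hfA, ?_⟩
  rintro _ ⟨k, rfl⟩
  refine squeeze_zero' (.of_forall fun _ => dist_nonneg) ?_ tendsto_one_div_add_atTop_nhds_zero_nat
  filter_upwards [eventually_ge_atTop k] with n hn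
  exact (hf n _ (Finset.mem_image_of_mem q (Finset.mem_range.2 (Nat.lt_succ_of_le hn)))).le

end Cp

/-- if the closure of `A ⊆ C_p(X,[0,1])` in `C_p(X)` is not countably
compact (X first countable), then the double ultralimit condition fails. -/
theorem stmt_4 {X : Type*} [TopologicalSpace X] [FirstCountableTopology X]
    (A : Set (Cp X)) (hA : ∀ f ∈ A, ∀ x, f.1 x ∈ Set.Icc (0:ℝ) 1)
    (hnc : ¬ CountablyCompactIn (Y := closure A) (Set.univ : Set (closure A))) :
    ∃ f : ℕ → Cp X, (∀ n, f n ∈ A) ∧ ∃ (x : ℕ → X) (𝒰 𝒱 : Ultrafilter ℕ) (y : X),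
      Tendsto x ↑𝒱 (𝓝 y) ∧
      ∃ (g h : ℕ → ℝ) (α β : ℝ),
        (∀ n, Tendsto (fun m => (f n).1 (x m)) ↑𝒱 (𝓝 (g n))) ∧
        Tendsto g ↑𝒰 (𝓝 α) ∧
        (∀ m, Tendsto (fun n => (f n).1 (x m)) ↑𝒰 (𝓝 (h m))) ∧
        Tendsto h ↑𝒱 (𝓝 β) ∧
        α ≠ β := by
  obtain ⟨ψ, hψinj, hψA, hψlim⟩ := exists_injective_seq_of_not_countablyCompactIn hnc
  let 𝒰 : Ultrafilter ℕ := .of atTop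
  have h𝒰 : (𝒰 : Filter ℕ) ≤ atTop := Ultrafilter.of_le _
  choose φ hφI hφ using fun x => isCompact_Icc.exists_tendsto_ultrafilter
    (fun n => Cp.apply_mem_of_mem_closure isClosed_Icc hA (hψA n) x) 𝒰
  have hφdisc : ¬ Continuous φ := fun hc => by
    have hψφ := (Cp.tendsto_nhds_iff (Φ := ⟨φ, hc⟩)).2 hφ
    exact hψlim _ (isClosed_closure.mem_of_tendsto hψφ (.of_forall hψA))
      (isLimitPt_range_of_tendsto hψinj (h𝒰.trans Nat.cofinite_eq_atTop.ge) hψφ)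
  obtain ⟨x₀, hx₀⟩ := not_forall.1 (mt continuous_iff_continuousAt.2 hφdisc)
  obtain ⟨x, 𝒱, β, hx, hβ, hβne⟩ :=
    exists_ultrafilter_tendsto_ne_of_not_continuousAt isCompact_Icc hφI hx₀
  obtain ⟨f, hfA, hf⟩ :=
    Cp.exists_seq_dist_tendsto_zero hψA ((countable_range x).insert x₀) (insert_nonempty _ _)
  have hfφ : ∀ q ∈ insert x₀ (range x), Tendsto (fun n => (f n).1 q) 𝒰 (𝓝 (φ q)) :=
    fun q hq => (hφ q).congr_dist (by simpa only [dist_comm] using (hf q hq).mono_left h𝒰)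
  exact ⟨f, hfA, x, 𝒰, 𝒱, x₀, hx, _, _, _, β, fun n => ((f n).2.tendsto x₀).comp hx,
    hfφ x₀ (mem_insert _ _), fun m => hfφ (x m) (mem_insert_of_mem _ (mem_range_self m)), hβ,
    hβne.symm⟩
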